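/- For any α ∈ (0,1), ∫_ℝ |ξ|^{α+1} · 𝓕(φ'_α)(ξ) dξ = Γ((2α+3)/2) / π^{(2α+3)/2}. -/

import Mathlib

open MeasureTheory Filter Real
open scoped ENNReal

noncomputable section

/-- Fourier transform of a real-valued function on ℝ, as a complex-valued function:
`𝓕f(ξ) = ∫ e^{-2πixξ} f(x) dx`. -/
def FT (f : ℝ → ℝ) : ℝ → ℂ :=
  FourierTransform.fourier (fun x => (f x : ℂ))

/-! Subordination, `(1 + x²)^(-s) = π^s / Γ(s) ∫₀^∞ t^(s-1) e^(-πt) e^(-πt x²) dt`, writes the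
function as a superposition of Gaussians. Fourier transforming under the integral (Fubini; the
Gaussian `e^(-πt x²)` goes to `t^(-1/2) e^(-πξ²/t)`) gives its transform as a superposition of
Gaussians in `ξ`. Integrating `|ξ|^q` against these, first in `ξ` and then in `t`, produces two
Gamma integrals; for `s = (α + 2)/2` and `q = α + 1` the factor `Γ(s)` cancels. -/

open Set FourierTransform

theorem integrableOn_rpow_mul_exp_neg_mul {a r : ℝ} (ha : -1 < a) (hr : 0 < r) :
    IntegrableOn (fun t : ℝ => t ^ a * exp (-(r * t))) (Ioi 0) := by
  simpa only [rpow_one, neg_mul] using integrableOn_rpow_mul_exp_neg_mul_rpow ha zero_lt_one hr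

theorem integrable_abs_rpow_mul_exp_neg_mul_sq {b q : ℝ} (hb : 0 < b) (hq : -1 < q) :
    Integrable (fun x : ℝ => |x| ^ q * exp (-b * x ^ 2)) := by
  have h := integrable_rpow_mul_exp_neg_mul_sq hb hq
  rw [← integrableOn_univ, ← Iio_union_Ici (a := (0:ℝ)), integrableOn_union,
    integrableOn_Ici_iff_integrableOn_Ioi]
  constructor
  · rw [← (Measure.measurePreserving_neg (volume : Measure ℝ)).integrableOn_comp_preimage
      (Homeomorph.neg ℝ).measurableEmbedding]
    simp only [Function.comp_def, neg_sq, neg_preimage, neg_Iio, neg_zero, abs_neg]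
    refine (h.integrableOn.mono_set (subset_univ _)).congr_fun (fun x hx => ?_) measurableSet_Ioi
    rw [abs_of_pos hx]
  · refine (h.integrableOn.mono_set (subset_univ _)).congr_fun (fun x hx => ?_) measurableSet_Ioi
    rw [abs_of_pos hx]

theorem integral_abs_rpow_mul_exp_neg_mul_sq {b q : ℝ} (hb : 0 < b) (hq : -1 < q) :
    ∫ x : ℝ, |x| ^ q * exp (-b * x ^ 2) = b ^ (-(q + 1) / 2) * Gamma ((q + 1) / 2) := by
  have h := integral_comp_abs (f := fun r : ℝ => r ^ q * exp (-b * r ^ 2))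
  simp only [sq_abs] at h
  have h2 := integral_rpow_mul_exp_neg_mul_rpow (p := 2) two_pos hq hb
  simp_rw [rpow_two] at h2
  rw [h, h2]
  ring

theorem FT_exp_neg_pi_mul_sq {t : ℝ} (ht : 0 < t) (ξ : ℝ) :
    FT (fun x => exp (-(π * t) * x ^ 2)) ξ =
      ((t ^ (-(1 / 2) : ℝ) * exp (-(π / t) * ξ ^ 2) : ℝ) : ℂ) := by
  have h := congrFun (fourier_gaussian_pi (b := t) (by simpa using ht)) ξ
  simp only [FT]
  convert h using 2
  · ext x; push_cast; ring_nf
  · rw [Complex.ofReal_mul, Complex.ofReal_cpow ht.le, Complex.ofReal_neg, Complex.cpow_neg,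
      one_div]
    push_cast; ring_nf

theorem one_add_sq_rpow_neg_eq_integral {s : ℝ} (hs : 0 < s) (x : ℝ) :
    (1 + x ^ 2) ^ (-s) = ∫ t in Ioi (0:ℝ),
      π ^ s / Gamma s * t ^ (s - 1) * exp (-(π * t)) * exp (-(π * t) * x ^ 2) := by
  have hx : (0:ℝ) < 1 + x ^ 2 := by positivity
  have hr : (0:ℝ) < π * (1 + x ^ 2) := by positivity
  have hexp : ∀ t, exp (-(π * t)) * exp (-(π * t) * x ^ 2) = exp (-(π * (1 + x ^ 2) * t)) := by
    intro t; rw [← exp_add]; ring_nf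
  simp_rw [mul_assoc, hexp, integral_const_mul, integral_rpow_mul_exp_neg_mul_Ioi hs hr,
    one_div, inv_rpow hr.le, mul_rpow pi_pos.le hx.le, rpow_neg hx.le]
  field_simp [(Gamma_pos_of_pos hs).ne', (rpow_pos_of_pos pi_pos s).ne']

theorem FT_integral_mul_exp_neg_pi_mul_sq {w : ℝ → ℝ}
    (hw_meas : AEStronglyMeasurable w (volume.restrict (Ioi 0)))
    (hw : IntegrableOn (fun t => w t * t ^ (-(1 / 2) : ℝ)) (Ioi 0)) (ξ : ℝ) :
    FT (fun x => ∫ t in Ioi (0:ℝ), w t * exp (-(π * t) * x ^ 2)) ξ =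
      ((∫ t in Ioi (0:ℝ), w t * (t ^ (-(1 / 2) : ℝ) * exp (-(π / t) * ξ ^ 2)) : ℝ) : ℂ) := by
  set F : ℝ → ℝ → ℂ := fun x t => 𝐞 (-(x * ξ)) * ((w t * exp (-(π * t) * x ^ 2) : ℝ) : ℂ)
  have hF_meas : AEStronglyMeasurable (Function.uncurry F)
      (volume.prod (volume.restrict (Ioi 0))) := by
    have hchar : Continuous fun p : ℝ × ℝ => (𝐞 (-(p.1 * ξ)) : ℂ) :=
      continuous_subtype_val.comp (Real.continuous_fourierChar.comp (by fun_prop))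
    have hmix : AEStronglyMeasurable (fun p : ℝ × ℝ => w p.2 * exp (-(π * p.2) * p.1 ^ 2))
        (volume.prod (volume.restrict (Ioi 0))) :=
      hw_meas.comp_snd.mul (Continuous.aestronglyMeasurable (by fun_prop))
    exact hchar.aestronglyMeasurable.mul
      (Complex.continuous_ofReal.comp_aestronglyMeasurable hmix)
  have hslice_int : ∀ t ∈ Ioi (0:ℝ), Integrable (F · t) := by
    intro t ht
    have := ((integrable_exp_neg_mul_sq (mul_pos pi_pos ht)).const_mul (w t)).ofReal (𝕜 := ℂ)
    simpa [F, mul_comm, Circle.smul_def] using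
      (Real.fourierIntegral_convergent_iff (μ := volume) ξ).2 this
  have hslice : ∀ t ∈ Ioi (0:ℝ), ∫ x, F x t = w t * FT (fun x => exp (-(π * t) * x ^ 2)) ξ := by
    intro t ht
    simp only [F, FT, fourier_real_eq, Circle.smul_def, Complex.ofReal_mul,
      mul_left_comm _ (w t : ℂ)]
    exact integral_const_mul _ _
  have hnorm : ∀ t ∈ Ioi (0:ℝ), ∫ x, ‖F x t‖ = ‖w t * t ^ (-(1 / 2) : ℝ)‖ := by
    intro t ht
    have ht : 0 < t := ht
    simp only [F, norm_mul, Circle.norm_coe, one_mul, Complex.norm_real,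
      norm_of_nonneg (exp_pos _).le, norm_of_nonneg (rpow_pos_of_pos ht _).le]
    rw [integral_const_mul, integral_gaussian, div_mul_cancel_left₀ pi_pos.ne', sqrt_inv,
      sqrt_eq_rpow, rpow_neg ht.le]
  have hF_int : Integrable (Function.uncurry F) (volume.prod (volume.restrict (Ioi 0))) := by
    refine (integrable_prod_iff' hF_meas).2 ⟨?_, hw.norm.congr ?_⟩
    · filter_upwards [ae_restrict_mem measurableSet_Ioi] with t ht using hslice_int t ht
    · filter_upwards [ae_restrict_mem measurableSet_Ioi] with t ht using (hnorm t ht).symm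
  calc FT (fun x => ∫ t in Ioi (0:ℝ), w t * exp (-(π * t) * x ^ 2)) ξ
      = ∫ x, ∫ t in Ioi (0:ℝ), F x t := by
        rw [FT, fourier_real_eq]
        refine integral_congr_ae (Eventually.of_forall fun x => ?_)
        simp only [F, Circle.smul_def, smul_eq_mul]
        rw [← integral_complex_ofReal, integral_const_mul]
    _ = ∫ t in Ioi (0:ℝ), ∫ x, F x t := integral_integral_swap hF_int
    _ = ∫ t in Ioi (0:ℝ), ((w t * (t ^ (-(1 / 2) : ℝ) * exp (-(π / t) * ξ ^ 2)) : ℝ) : ℂ) := by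
        refine setIntegral_congr_fun measurableSet_Ioi fun t ht => ?_
        rw [hslice t ht, FT_exp_neg_pi_mul_sq ht]
        push_cast; rfl
    _ = _ := integral_complex_ofReal

theorem integral_abs_rpow_mul_exp_neg_pi_div_mul_sq {q t : ℝ} (hq : -1 < q) (ht : 0 < t)
    (u : ℝ) :
    ∫ ξ : ℝ, |ξ| ^ q * (u * exp (-(π / t) * ξ ^ 2)) =
      Gamma ((q + 1) / 2) / π ^ ((q + 1) / 2) * (u * t ^ ((q + 1) / 2)) := by
  simp_rw [mul_left_comm _ u]
  rw [integral_const_mul, integral_abs_rpow_mul_exp_neg_mul_sq (div_pos pi_pos ht) hq,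
    div_rpow pi_pos.le ht.le, neg_div, rpow_neg pi_pos.le, rpow_neg ht.le, div_inv_eq_mul]
  ring

theorem integral_abs_rpow_mul_integral_mul_exp_neg_pi_div_mul_sq {q : ℝ} (hq : -1 < q)
    {v : ℝ → ℝ} (hv_meas : AEStronglyMeasurable v (volume.restrict (Ioi 0)))
    (hv : IntegrableOn (fun t => v t * t ^ ((q + 1) / 2)) (Ioi 0)) :
    ∫ ξ, |ξ| ^ q * ∫ t in Ioi (0:ℝ), v t * exp (-(π / t) * ξ ^ 2) =
      Gamma ((q + 1) / 2) / π ^ ((q + 1) / 2) * ∫ t in Ioi (0:ℝ), v t * t ^ ((q + 1) / 2) := by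
  set F : ℝ → ℝ → ℝ := fun ξ t => |ξ| ^ q * (v t * exp (-(π / t) * ξ ^ 2))
  have hF_meas : AEStronglyMeasurable (Function.uncurry F)
      (volume.prod (volume.restrict (Ioi 0))) :=
    (Measurable.aestronglyMeasurable (by fun_prop)).mul
      (hv_meas.comp_snd.mul (Measurable.aestronglyMeasurable (by fun_prop)))
  have hslice_int : ∀ t ∈ Ioi (0:ℝ), Integrable (F · t) := fun t ht => by
    simpa only [F, mul_left_comm _ (v t)] using
      (integrable_abs_rpow_mul_exp_neg_mul_sq (div_pos pi_pos ht) hq).const_mul (v t)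
  have hF_int : Integrable (Function.uncurry F) (volume.prod (volume.restrict (Ioi 0))) := by
    refine (integrable_prod_iff' hF_meas).2
      ⟨?_, (hv.norm.const_mul (Gamma ((q + 1) / 2) / π ^ ((q + 1) / 2))).congr ?_⟩
    · filter_upwards [ae_restrict_mem measurableSet_Ioi] with t ht using hslice_int t ht
    · filter_upwards [ae_restrict_mem measurableSet_Ioi] with t ht
      have ht : 0 < t := ht
      rw [norm_mul, norm_of_nonneg (rpow_pos_of_pos ht _).le,
        ← integral_abs_rpow_mul_exp_neg_pi_div_mul_sq hq ht]
      refine integral_congr_ae (Eventually.of_forall fun ξ => ?_)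
      simp only [F, Function.uncurry_apply_pair, norm_mul, norm_of_nonneg (exp_pos _).le,
        norm_of_nonneg (rpow_nonneg (abs_nonneg ξ) q)]
  calc ∫ ξ, |ξ| ^ q * ∫ t in Ioi (0:ℝ), v t * exp (-(π / t) * ξ ^ 2)
      = ∫ ξ, ∫ t in Ioi (0:ℝ), F ξ t := by simp only [F, integral_const_mul]
    _ = ∫ t in Ioi (0:ℝ), ∫ ξ, F ξ t := integral_integral_swap hF_int
    _ = ∫ t in Ioi (0:ℝ),
          Gamma ((q + 1) / 2) / π ^ ((q + 1) / 2) * (v t * t ^ ((q + 1) / 2)) :=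
        setIntegral_congr_fun measurableSet_Ioi fun t ht =>
          integral_abs_rpow_mul_exp_neg_pi_div_mul_sq hq ht (v t)
    _ = _ := integral_const_mul _ _

theorem integral_abs_rpow_mul_FT_one_add_sq_rpow_neg {s q : ℝ} (hs : 1 / 2 < s) (hq : -1 < q) :
    ∫ ξ, |ξ| ^ q * (FT (fun x => (1 + x ^ 2) ^ (-s)) ξ).re =
      Gamma ((q + 1) / 2) * Gamma (s + q / 2) / (Gamma s * π ^ (q + 1 / 2)) := by
  set c := π ^ s / Gamma s with hc
  set w : ℝ → ℝ := fun t => c * t ^ (s - 1) * exp (-(π * t))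
  have hw_meas : AEStronglyMeasurable w (volume.restrict (Ioi 0)) :=
    Measurable.aestronglyMeasurable (by fun_prop)
  have hw_rpow : ∀ a, ∀ t ∈ Ioi (0:ℝ), w t * t ^ a = c * (t ^ (s - 1 + a) * exp (-(π * t))) :=
    fun a t ht => by simp only [w, rpow_add (mem_Ioi.mp ht)]; ring
  have hw_int : ∀ a, -1 < s - 1 + a → IntegrableOn (fun t => w t * t ^ a) (Ioi 0) := fun a ha =>
    IntegrableOn.congr_fun ((integrableOn_rpow_mul_exp_neg_mul ha pi_pos).const_mul c)
      (fun t ht => (hw_rpow a t ht).symm) measurableSet_Ioi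
  have hφ : (fun x : ℝ => (1 + x ^ 2) ^ (-s)) =
      fun x => ∫ t in Ioi (0:ℝ), w t * exp (-(π * t) * x ^ 2) :=
    funext (one_add_sq_rpow_neg_eq_integral (by linarith))
  have hFT : ∀ ξ, (FT (fun x => (1 + x ^ 2) ^ (-s)) ξ).re =
      ∫ t in Ioi (0:ℝ), w t * t ^ (-(1 / 2) : ℝ) * exp (-(π / t) * ξ ^ 2) := fun ξ => by
    rw [hφ, FT_integral_mul_exp_neg_pi_mul_sq hw_meas (hw_int _ (by linarith)), Complex.ofReal_re]
    simp only [mul_assoc]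
  have hv : ∀ t ∈ Ioi (0:ℝ), w t * t ^ (-(1 / 2) : ℝ) * t ^ ((q + 1) / 2) = w t * t ^ (q / 2) :=
    fun t ht => by rw [mul_assoc, ← rpow_add (mem_Ioi.mp ht)]; ring_nf
  have hπ : π ^ (q + 1 / 2) = π ^ ((q + 1) / 2) * π ^ (s + q / 2) / π ^ s := by
    rw [← rpow_add pi_pos, ← rpow_sub pi_pos]; ring_nf
  simp_rw [hFT]
  rw [integral_abs_rpow_mul_integral_mul_exp_neg_pi_div_mul_sq
      (v := fun t => w t * t ^ (-(1 / 2) : ℝ)) hq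
      (hw_meas.mul (Measurable.aestronglyMeasurable (by fun_prop)))
      ((hw_int _ (by linarith)).congr_fun (fun t ht => (hv t ht).symm) measurableSet_Ioi),
    setIntegral_congr_fun measurableSet_Ioi hv, setIntegral_congr_fun measurableSet_Ioi (hw_rpow _),
    integral_const_mul, show s - 1 + q / 2 = s + q / 2 - 1 by ring,
    integral_rpow_mul_exp_neg_mul_Ioi (by linarith) pi_pos, one_div, inv_rpow pi_pos.le,
    hπ, hc]
  field_simp

/-- (The Fourier transform of `φ'_α` is real and nonnegative, so we
integrate its real part.) -/
theorem integral_abs_pow_fourier_phi_alpha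
    (α : ℝ) (hα : α ∈ Set.Ioo (0 : ℝ) 1) :
    ∫ ξ : ℝ, |ξ| ^ (α + 1) * (FT (fun x => (1 + x ^ 2) ^ (-(α + 2) / 2)) ξ).re =
      Real.Gamma ((2 * α + 3) / 2) / π ^ ((2 * α + 3) / 2) := by
  obtain ⟨hα0, -⟩ := hα
  have h := integral_abs_rpow_mul_FT_one_add_sq_rpow_neg (s := (α + 2) / 2) (q := α + 1)
    (by linarith) (by linarith)
  rw [show (α + 1 + 1) / 2 = (α + 2) / 2 by ring,
    show (α + 2) / 2 + (α + 1) / 2 = (2 * α + 3) / 2 by ring,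
    show α + 1 + 1 / 2 = (2 * α + 3) / 2 by ring,
    mul_div_mul_left _ _ (Gamma_pos_of_pos (by linarith)).ne'] at h
  simpa only [neg_div] using h
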